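/- Let M ∈ ℝ^{n×n} satisfy zᵀMz ≥ 0 for all z ∈ ℝⁿ, let q ∈ ℝⁿ, let S ⊆ ℝⁿ, and let F(x) = Mx + q. If x and y are both solutions of VI(S, F), then xᵀMx = yᵀMy. In particular, there exists a constant d ≥ 0 such that every solution x of VI(S, F) satisfies xᵀMx = d. -/

import Mathlib

/-!
If `x` and `y` both solve `VI(S, F)`, testing each inequality at the other point and adding gives
`(y - x)ᵀ (F y - F x) ≤ 0`. For `F z = M z + q` this says `zᵀ M z ≤ 0` with `z = y - x`, so
`zᵀ M z = 0`. Since `M` is positive semidefinite, a zero of its quadratic form lies in the kernel of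
its symmetric part, i.e. `zᵀ M w + wᵀ M z = 0` for every `w`; expanding `yᵀ M y = (x + z)ᵀ M (x + z)`
then leaves `xᵀ M x`.
-/

open Matrix

theorem Matrix.dotProduct_mulVec_add_add {ι R : Type*} [Fintype ι] [CommRing R]
    (M : Matrix ι ι R) (x z : ι → R) :
    (x + z) ⬝ᵥ M *ᵥ (x + z) = x ⬝ᵥ M *ᵥ x + (z ⬝ᵥ M *ᵥ x + x ⬝ᵥ M *ᵥ z) + z ⬝ᵥ M *ᵥ z := by
  simp only [mulVec_add, dotProduct_add, add_dotProduct]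
  ring

variable {ι 𝕜 : Type*} [Fintype ι] [Field 𝕜] [LinearOrder 𝕜] [IsStrictOrderedRing 𝕜]

def IsVISolution (S : Set (ι → 𝕜)) (F : (ι → 𝕜) → ι → 𝕜) (x : ι → 𝕜) : Prop :=
  x ∈ S ∧ ∀ z ∈ S, 0 ≤ (z - x) ⬝ᵥ F x

theorem IsVISolution.dotProduct_sub_nonpos {S : Set (ι → 𝕜)} {F : (ι → 𝕜) → ι → 𝕜}
    {x y : ι → 𝕜} (hx : IsVISolution S F x) (hy : IsVISolution S F y) :
    (y - x) ⬝ᵥ (F y - F x) ≤ 0 := by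
  have hxy := hx.2 y hy.1
  have hyx := hy.2 x hx.1
  rw [← neg_sub y x, neg_dotProduct] at hyx
  rw [dotProduct_sub]
  linarith

theorem eq_zero_of_forall_mul_add_sq_mul_nonneg {b a : 𝕜} (h : ∀ t : 𝕜, 0 ≤ t * b + t ^ 2 * a) :
    b = 0 := by
  have hdiscr : discrim a b 0 ≤ 0 := discrim_le_zero fun t => by linarith [h t, sq t]
  rw [discrim, mul_zero, sub_zero] at hdiscr
  exact pow_eq_zero_iff two_ne_zero |>.mp (le_antisymm hdiscr (sq_nonneg b))

theorem Matrix.dotProduct_mulVec_add_dotProduct_mulVec_eq_zero {M : Matrix ι ι 𝕜}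
    (hM : ∀ v, 0 ≤ v ⬝ᵥ M *ᵥ v) {z : ι → 𝕜} (hz : z ⬝ᵥ M *ᵥ z = 0) (w : ι → 𝕜) :
    z ⬝ᵥ M *ᵥ w + w ⬝ᵥ M *ᵥ z = 0 := by
  refine eq_zero_of_forall_mul_add_sq_mul_nonneg (a := w ⬝ᵥ M *ᵥ w) fun t => ?_
  have h := hM (z + t • w)
  simp only [dotProduct_mulVec_add_add, hz, mulVec_smul, dotProduct_smul, smul_dotProduct,
    smul_eq_mul] at h
  linarith

theorem IsVISolution.dotProduct_mulVec_self_eq {M : Matrix ι ι 𝕜} (hM : ∀ v, 0 ≤ v ⬝ᵥ M *ᵥ v)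
    {q : ι → 𝕜} {S : Set (ι → 𝕜)} {x y : ι → 𝕜}
    (hx : IsVISolution S (fun v => M *ᵥ v + q) x) (hy : IsVISolution S (fun v => M *ᵥ v + q) y) :
    x ⬝ᵥ M *ᵥ x = y ⬝ᵥ M *ᵥ y := by
  set z := y - x
  have hz_nonpos : z ⬝ᵥ M *ᵥ z ≤ 0 := by
    simpa [z, mulVec_sub] using hx.dotProduct_sub_nonpos hy
  have hz : z ⬝ᵥ M *ᵥ z = 0 := le_antisymm hz_nonpos (hM z)
  rw [show y = x + z by simp [z], dotProduct_mulVec_add_add,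
    dotProduct_mulVec_add_dotProduct_mulVec_eq_zero hM hz, hz, add_zero, add_zero]

/-- If `zᵀMz ≥ 0` for all `z` and `x, y` are both solutions of `VI(S, F)` with
`F x = M x + q`, then `xᵀMx = yᵀMy`; in particular there exists a constant
`d ≥ 0` such that every solution `x` satisfies `xᵀMx = d`. -/
theorem VI_solutions_common_d (n : ℕ) (M : Matrix (Fin n) (Fin n) ℝ)
    (q : Fin n → ℝ) (S : Set (Fin n → ℝ))
    (hpsd : ∀ z : Fin n → ℝ, 0 ≤ z ⬝ᵥ M.mulVec z) :
    (∀ x y : Fin n → ℝ,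
        (x ∈ S ∧ ∀ z ∈ S, 0 ≤ (z - x) ⬝ᵥ (M.mulVec x + q)) →
        (y ∈ S ∧ ∀ z ∈ S, 0 ≤ (z - y) ⬝ᵥ (M.mulVec y + q)) →
        x ⬝ᵥ M.mulVec x = y ⬝ᵥ M.mulVec y) ∧
    (∃ d : ℝ, 0 ≤ d ∧ ∀ x : Fin n → ℝ,
        (x ∈ S ∧ ∀ z ∈ S, 0 ≤ (z - x) ⬝ᵥ (M.mulVec x + q)) →
        x ⬝ᵥ M.mulVec x = d) := by
  have common : ∀ x y, IsVISolution S (fun v => M *ᵥ v + q) x →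
      IsVISolution S (fun v => M *ᵥ v + q) y → x ⬝ᵥ M *ᵥ x = y ⬝ᵥ M *ᵥ y :=
    fun _ _ hx hy => hx.dotProduct_mulVec_self_eq hpsd hy
  refine ⟨common, ?_⟩
  by_cases h : ∃ x₀, IsVISolution S (fun v => M *ᵥ v + q) x₀
  · obtain ⟨x₀, hx₀⟩ := h
    exact ⟨x₀ ⬝ᵥ M *ᵥ x₀, hpsd x₀, fun x hx => common x x₀ hx hx₀⟩
  · exact ⟨0, le_rfl, fun x hx => absurd ⟨x, hx⟩ h⟩
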